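/- arXiv:1402.6151 — 4 statements merged into one kernel-verified Lean document; each statement's English description precedes it below -/
import Mathlib

section
/- The function f(x) = 1/x² − 2φ(x)/(x(2Φ(x)−1)) is strictly decreasing on the interval (0, ∞); that is, for all real numbers x, y with 0 < x < y we have f(y) < f(x). -/
open Real Set MeasureTheory

/-- The standard normal probability density function. -/
noncomputable def phi (x : ℝ) : ℝ := (Real.sqrt (2 * Real.pi))⁻¹ * Real.exp (-x ^ 2 / 2)

/-- The standard normal cumulative distribution function. -/
noncomputable def Phi (x : ℝ) : ℝ := ∫ r in Set.Iic x, phi r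

/-- f(x) = 1/x² − 2φ(x)/(x(2Φ(x)−1)). -/
noncomputable def f (x : ℝ) : ℝ := 1 / x ^ 2 - 2 * phi x / (x * (2 * Phi x - 1))

lemma phi_pos (x : ℝ) : 0 < phi x := by
  unfold phi
  positivity

lemma continuous_phi : Continuous phi := by
  unfold phi
  fun_prop

lemma integrable_phi : Integrable phi := by
  have h : Integrable (fun x : ℝ => (Real.sqrt (2 * Real.pi))⁻¹ * Real.exp (-(1/2) * x ^ 2)) :=
    (integrable_exp_neg_mul_sq (by norm_num : (0:ℝ) < 1/2)).const_mul _
  refine h.congr ?_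
  filter_upwards with x
  unfold phi
  ring_nf

lemma hasDerivAt_phi (x : ℝ) : HasDerivAt phi (-x * phi x) x := by
  have h1 : HasDerivAt (fun x : ℝ => -x ^ 2 / 2) (-x) x := by
    have := ((hasDerivAt_pow 2 x).neg).div_const 2
    refine this.congr_deriv ?_
    simp; ring
  have h2 := (h1.exp).const_mul (Real.sqrt (2 * Real.pi))⁻¹
  refine h2.congr_deriv ?_
  unfold phi; ring

lemma hasDerivAt_Phi (x : ℝ) : HasDerivAt Phi (phi x) x := by
  have key : ∀ y : ℝ, Phi y = Phi 0 + ∫ t in (0:ℝ)..y, phi t := by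
    intro y
    have := intervalIntegral.integral_Iic_sub_Iic (f := phi) (μ := volume) (a := 0) (b := y)
      integrable_phi.integrableOn integrable_phi.integrableOn
    unfold Phi
    rw [← this]; ring
  have h : HasDerivAt (fun y => Phi 0 + ∫ t in (0:ℝ)..y, phi t) (phi x) x := by
    have := (intervalIntegral.integral_hasDerivAt_right
      (integrable_phi.intervalIntegrable (a := 0) (b := x))
      (continuous_phi.stronglyMeasurableAtFilter _ _)
      continuous_phi.continuousAt)
    exact this.const_add _
  exact h.congr_of_eventuallyEq (Filter.Eventually.of_forall fun y => (key y))

lemma Phi_zero : Phi 0 = 1/2 := by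
  have h1 : Phi 0 = (Real.sqrt (2 * Real.pi))⁻¹ * ∫ x in Iic (0:ℝ), Real.exp (-x ^ 2 / 2) := by
    unfold Phi phi
    rw [integral_const_mul]
  have h2 : (∫ x in Iic (0:ℝ), Real.exp (-x ^ 2 / 2))
      = ∫ x in Ioi (0:ℝ), Real.exp (-(1/2) * x ^ 2) := by
    rw [show Ioi (0:ℝ) = Ioi (-0) by norm_num,
      ← integral_comp_neg_Iic (0:ℝ) (fun x => Real.exp (-(1/2) * x ^ 2))]
    congr 1 with x
    ring_nf
  have h3 : (∫ x in Ioi (0:ℝ), Real.exp (-(1/2) * x ^ 2)) = Real.sqrt (2 * Real.pi) / 2 := by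
    rw [integral_gaussian_Ioi]
    norm_num
    ring
  have hs : Real.sqrt (2 * Real.pi) ≠ 0 := by positivity
  rw [h1, h2, h3]
  field_simp

lemma strictMono_Phi : StrictMono Phi :=
  strictMono_of_deriv_pos fun x => by
    rw [(hasDerivAt_Phi x).deriv]; exact phi_pos x

lemma G_pos {x : ℝ} (hx : 0 < x) : 0 < 2 * Phi x - 1 := by
  have := strictMono_Phi hx
  rw [Phi_zero] at this
  linarith

/-- R(x) = (2Φ(x) − 1)/φ(x). -/
noncomputable def Rf (x : ℝ) : ℝ := (2 * Phi x - 1) / phi x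

/-- S(x), the lower bound for R. -/
noncomputable def Sf (x : ℝ) : ℝ :=
  x / 2 * ((1 + x ^ 2) + Real.sqrt ((1 + x ^ 2) ^ 2 + 8))

/-- v(x) = √((1+x²)²+8). -/
noncomputable def vf (x : ℝ) : ℝ := Real.sqrt ((1 + x ^ 2) ^ 2 + 8)

lemma vf_pos (x : ℝ) : 0 < vf x := Real.sqrt_pos.mpr (by positivity)

lemma vf_sq (x : ℝ) : vf x ^ 2 = (1 + x ^ 2) ^ 2 + 8 :=
  Real.sq_sqrt (by positivity)

lemma vf_gt (x : ℝ) : 1 + x ^ 2 < vf x := by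
  have h : (1 + x ^ 2) = Real.sqrt ((1 + x ^ 2) ^ 2) := by
    rw [Real.sqrt_sq (by positivity)]
  rw [h]
  exact Real.sqrt_lt_sqrt (by positivity) (by nlinarith)

lemma Rf_zero : Rf 0 = 0 := by
  unfold Rf
  rw [Phi_zero]
  norm_num

lemma Sf_zero : Sf 0 = 0 := by unfold Sf; norm_num

lemma hasDerivAt_Rf (x : ℝ) : HasDerivAt Rf (2 + x * Rf x) x := by
  have hp := phi_pos x
  have h := ((hasDerivAt_Phi x).const_mul 2 |>.sub_const 1).div (hasDerivAt_phi x) hp.ne'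
  refine h.congr_deriv ?_
  unfold Rf
  field_simp
  ring

lemma hasDerivAt_Sf (x : ℝ) :
    HasDerivAt Sf ((1 + x ^ 2 + vf x) / 2 + x / 2 * (2 * x + 2 * x * (1 + x ^ 2) / vf x)) x := by
  have hv := vf_pos x
  have hinner : HasDerivAt (fun y : ℝ => (1 + y ^ 2) ^ 2 + 8) (2 * (1 + x ^ 2) * (2 * x)) x := by
    have h1 : HasDerivAt (fun y : ℝ => 1 + y ^ 2) (2 * x) x := by
      simpa using ((hasDerivAt_pow 2 x).const_add 1)
    simpa using (h1.pow 2).add_const 8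
  have hsq : HasDerivAt (fun y : ℝ => Real.sqrt ((1 + y ^ 2) ^ 2 + 8))
      (2 * (1 + x ^ 2) * (2 * x) / (2 * vf x)) x := by
    have := (Real.hasDerivAt_sqrt (by positivity : ((1 + x ^ 2) ^ 2 + 8 : ℝ) ≠ 0)).comp x hinner
    refine this.congr_deriv ?_
    unfold vf
    field_simp
  have hx2 : HasDerivAt (fun y : ℝ => y / 2) (1 / 2) x := (hasDerivAt_id x).div_const 2
  have hu : HasDerivAt (fun y : ℝ => (1 + y ^ 2) + Real.sqrt ((1 + y ^ 2) ^ 2 + 8))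
      (2 * x + 2 * (1 + x ^ 2) * (2 * x) / (2 * vf x)) x := by
    have h1 : HasDerivAt (fun y : ℝ => 1 + y ^ 2) (2 * x) x := by
      simpa using ((hasDerivAt_pow 2 x).const_add 1)
    exact h1.add hsq
  have h := hx2.mul hu
  refine h.congr_deriv ?_
  unfold vf
  have hv' : vf x ≠ 0 := (vf_pos x).ne'
  unfold vf at hv'
  field_simp

/-- S'(x), the derivative of S. -/
noncomputable def Sd (x : ℝ) : ℝ :=
  (1 + x ^ 2 + vf x) / 2 + x / 2 * (2 * x + 2 * x * (1 + x ^ 2) / vf x)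

lemma hasDerivAt_Sf' (x : ℝ) : HasDerivAt Sf (Sd x) x := hasDerivAt_Sf x

lemma Sd_lt {x : ℝ} (hx : 0 < x) : Sd x < 2 + x * Sf x := by
  have hv := vf_pos x
  have hv2 := vf_sq x
  have hSf : Sf x = x / 2 * ((1 + x ^ 2) + vf x) := rfl
  set v := vf x with hvdef
  -- polynomial core
  have poly : v * ((1 + x ^ 2) + v) + 2 * x ^ 2 * v + 2 * x ^ 2 * (1 + x ^ 2)
      < 4 * v + x ^ 2 * v * ((1 + x ^ 2) + v) := by
    set u := 1 + x ^ 2 with hu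
    have hq : 0 < u ^ 2 - 4 * u + 6 := by nlinarith [sq_nonneg (u - 2)]
    have key : 16 - 10 * u + 4 * u ^ 2 - u ^ 3 < v * (u ^ 2 - 4 * u + 6) := by
      rcases le_or_gt (16 - 10 * u + 4 * u ^ 2 - u ^ 3) 0 with h | h
      · have := mul_pos hv hq; linarith
      · have hsq : (v * (u ^ 2 - 4 * u + 6)) ^ 2
            = (16 - 10 * u + 4 * u ^ 2 - u ^ 3) ^ 2 + 32 * x ^ 4 := by
          rw [mul_pow, hv2, hu]; ring
        nlinarith [mul_pos hv hq, hsq, pow_pos hx 4]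
    have e : v * (u + v) + 2 * x ^ 2 * v + 2 * x ^ 2 * u
        - (4 * v + x ^ 2 * v * (u + v))
        = (16 - 10 * u + 4 * u ^ 2 - u ^ 3) - v * (u ^ 2 - 4 * u + 6) := by
      rw [hu]; linear_combination (1 - x ^ 2) * hv2
    linarith [key, e]
  have e1 : Sd x = (v * ((1 + x ^ 2) + v) + 2 * x ^ 2 * v + 2 * x ^ 2 * (1 + x ^ 2)) / (2 * v) := by
    unfold Sd
    rw [← hvdef]
    field_simp
    ring
  have e2 : 2 + x * Sf x = (4 * v + x ^ 2 * v * ((1 + x ^ 2) + v)) / (2 * v) := by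
    rw [hSf]
    field_simp
    ring
  rw [e1, e2, div_lt_div_iff₀ (by positivity) (by positivity)]
  linarith [mul_lt_mul_of_pos_right poly (show (0:ℝ) < 2 * v by positivity)]

lemma hasDerivAt_negsq (x : ℝ) : HasDerivAt (fun y : ℝ => -y ^ 2 / 2) (-x) x := by
  have := ((hasDerivAt_pow 2 x).neg).div_const 2
  refine this.congr_deriv ?_
  simp; ring

lemma Sf_lt_Rf {x : ℝ} (hx : 0 < x) : Sf x < Rf x := by
  set E : ℝ → ℝ := fun y => (Rf y - Sf y) * Real.exp (-y ^ 2 / 2) with hE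
  have hEd : ∀ y : ℝ, HasDerivAt E ((2 + y * Sf y - Sd y) * Real.exp (-y ^ 2 / 2)) y := by
    intro y
    have h1 : HasDerivAt (fun z => Rf z - Sf z) (2 + y * Rf y - Sd y) y :=
      (hasDerivAt_Rf y).sub (hasDerivAt_Sf' y)
    have hexp : HasDerivAt (fun z : ℝ => Real.exp (-z ^ 2 / 2)) (-y * Real.exp (-y ^ 2 / 2)) y := by
      have := (hasDerivAt_negsq y).exp
      simpa [mul_comm] using this
    have := h1.mul hexp
    refine this.congr_deriv ?_
    ring
  have hcont : ContinuousOn E (Ici 0) := fun y _ => (hEd y).continuousAt.continuousWithinAt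
  have hpos : ∀ y ∈ interior (Ici (0:ℝ)), 0 < deriv E y := by
    rw [interior_Ici]
    intro y hy
    rw [(hEd y).deriv]
    have := Sd_lt (mem_Ioi.mp hy)
    exact mul_pos (by linarith) (Real.exp_pos _)
  have hmono := strictMonoOn_of_deriv_pos (convex_Ici 0) hcont hpos
  have hx' := hmono (self_mem_Ici) (mem_Ici.mpr hx.le) hx
  have hE0 : E 0 = 0 := by simp [hE, Rf_zero, Sf_zero]
  rw [hE0] at hx'
  have hx'' : 0 < (Rf x - Sf x) * Real.exp (-x ^ 2 / 2) := hx'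
  nlinarith [hx'', Real.exp_pos (-x ^ 2 / 2)]

lemma hasDerivAt_f {x : ℝ} (hx : 0 < x) : HasDerivAt f
    (-2 / x ^ 3 + 2 * phi x * ((x ^ 2 + 1) * (2 * Phi x - 1) + 2 * x * phi x)
      / (x ^ 2 * (2 * Phi x - 1) ^ 2)) x := by
  have hG := G_pos hx
  have hp := phi_pos x
  have hxne : x ≠ 0 := hx.ne'
  have h1 : HasDerivAt (fun y : ℝ => 1 / y ^ 2) (-(2 * x) / (x ^ 2) ^ 2) x := by
    have := (hasDerivAt_pow 2 x).inv (by positivity)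
    simp only [one_div]
    refine this.congr_deriv ?_
    norm_num
  have hnum : HasDerivAt (fun y => 2 * phi y) (2 * (-x * phi x)) x :=
    (hasDerivAt_phi x).const_mul 2
  have hden : HasDerivAt (fun y => y * (2 * Phi y - 1))
      (1 * (2 * Phi x - 1) + x * (2 * phi x)) x :=
    (hasDerivAt_id x).mul (((hasDerivAt_Phi x).const_mul 2).sub_const 1)
  have hdne : x * (2 * Phi x - 1) ≠ 0 := by positivity
  have h2 := hnum.div hden hdne
  have h := h1.sub h2
  have hf : f = fun y => 1 / y ^ 2 - 2 * phi y / (y * (2 * Phi y - 1)) := rfl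
  rw [hf]
  refine h.congr_deriv ?_
  field_simp
  ring

lemma deriv_f_neg {x : ℝ} (hx : 0 < x) :
    -2 / x ^ 3 + 2 * phi x * ((x ^ 2 + 1) * (2 * Phi x - 1) + 2 * x * phi x)
      / (x ^ 2 * (2 * Phi x - 1) ^ 2) < 0 := by
  have hG := G_pos hx
  have hp := phi_pos x
  have hR := Sf_lt_Rf hx
  have hRG : Rf x * phi x = 2 * Phi x - 1 := by unfold Rf; field_simp
  have hSf : Sf x = x / 2 * ((1 + x ^ 2) + vf x) := rfl
  have hSb : x * (1 + x ^ 2) ≤ Sf x := by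
    have hvg := vf_gt x
    rw [hSf]; nlinarith [hx.le]
  have hident : Sf x ^ 2 = x * (1 + x ^ 2) * Sf x + 2 * x ^ 2 := by
    have hv2 := vf_sq x
    rw [hSf]
    linear_combination (x ^ 2 / 4) * hv2
  have hSpos : 0 < Sf x := lt_of_lt_of_le (by positivity) hSb
  have hquad : x * ((x ^ 2 + 1) * Rf x + 2 * x) < Rf x ^ 2 := by
    have h1 : 0 < Rf x - Sf x := by linarith
    have h2 : 0 < Rf x + Sf x - x * (1 + x ^ 2) := by linarith
    nlinarith [mul_pos h1 h2, hident]
  have hkey : x * phi x * ((x ^ 2 + 1) * (2 * Phi x - 1) + 2 * x * phi x)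
      < (2 * Phi x - 1) ^ 2 := by
    have hG2 : (2 * Phi x - 1) ^ 2 = Rf x ^ 2 * phi x ^ 2 := by rw [← hRG]; ring
    have h3 : x * phi x * ((x ^ 2 + 1) * (2 * Phi x - 1) + 2 * x * phi x)
        = (x * ((x ^ 2 + 1) * Rf x + 2 * x)) * phi x ^ 2 := by rw [← hRG]; ring
    rw [hG2, h3]
    exact mul_lt_mul_of_pos_right hquad (by positivity)
  have hlt : 2 * phi x * ((x ^ 2 + 1) * (2 * Phi x - 1) + 2 * x * phi x)
      / (x ^ 2 * (2 * Phi x - 1) ^ 2) < 2 / x ^ 3 := by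
    rw [div_lt_div_iff₀ (by positivity) (by positivity)]
    nlinarith [mul_lt_mul_of_pos_left hkey (show (0:ℝ) < 2 * x ^ 2 by positivity)]
  have hneg : -2 / x ^ 3 = -(2 / x ^ 3) := by ring
  linarith

theorem f_strict_anti : ∀ x y : ℝ, 0 < x → x < y → f y < f x := by
  intro x y hx hxy
  have hanti : StrictAntiOn f (Ioi 0) := by
    refine strictAntiOn_of_deriv_neg (convex_Ioi 0)
      (fun z hz => (hasDerivAt_f (mem_Ioi.mp hz)).continuousAt.continuousWithinAt) ?_
    rw [interior_Ioi]
    intro z hz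
    rw [(hasDerivAt_f (mem_Ioi.mp hz)).deriv]
    exact deriv_f_neg (mem_Ioi.mp hz)
  exact hanti (mem_Ioi.mpr hx) (mem_Ioi.mpr (hx.trans hxy)) hxy
end

section
/- For every real number x > 0, the quantity α(x) = (x⁴ − 2x² + 3)·√(x⁴ + 2x² + 9) + x⁶ − x⁴ + 5x² − 9 is strictly positive. -/
theorem alpha_pos (x : ℝ) (hx : 0 < x) :
    0 < (x ^ 4 - 2 * x ^ 2 + 3) * Real.sqrt (x ^ 4 + 2 * x ^ 2 + 9) +
      x ^ 6 - x ^ 4 + 5 * x ^ 2 - 9 := by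
  set s := Real.sqrt (x ^ 4 + 2 * x ^ 2 + 9) with hs_def
  have hpos : (0:ℝ) < x ^ 4 + 2 * x ^ 2 + 9 := by positivity
  have hs2 : s ^ 2 = x ^ 4 + 2 * x ^ 2 + 9 := Real.sq_sqrt hpos.le
  have hs0 : 0 < s := Real.sqrt_pos.mpr hpos
  have hA : 0 < x ^ 4 - 2 * x ^ 2 + 3 := by nlinarith [sq_nonneg (x ^ 2 - 1)]
  have hAs : 0 < (x ^ 4 - 2 * x ^ 2 + 3) * s := mul_pos hA hs0
  have key : ((x ^ 4 - 2 * x ^ 2 + 3) * s) ^ 2 - (x ^ 6 - x ^ 4 + 5 * x ^ 2 - 9) ^ 2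
      = 32 * x ^ 4 := by
    rw [mul_pow, hs2]; ring
  nlinarith [key, hAs, pow_pos hx 4, sq_nonneg ((x ^ 4 - 2 * x ^ 2 + 3) * s + (x ^ 6 - x ^ 4 + 5 * x ^ 2 - 9))]
end

section
/- For all real numbers t > 0 and δ > 0, the variance of the normal distribution N(0, δ²) truncated to [−t, t] is strictly less than t²/3: (∫_{−t}^{t} x²·exp(−x²/(2δ²)) dx) / (∫_{−t}^{t} exp(−x²/(2δ²)) dx) < t²/3. -/
open Real Set intervalIntegral

theorem truncated_normal_variance_lt (t δ : ℝ) (ht : 0 < t) (hδ : 0 < δ) :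
    (∫ x in (-t)..t, x ^ 2 * Real.exp (-x ^ 2 / (2 * δ ^ 2))) /
      (∫ x in (-t)..t, Real.exp (-x ^ 2 / (2 * δ ^ 2))) < t ^ 2 / 3 := by
  set w : ℝ → ℝ := fun x => Real.exp (-x ^ 2 / (2 * δ ^ 2)) with hw
  have hwc : Continuous w := by fun_prop
  have hwpos : ∀ x, 0 < w x := fun x => Real.exp_pos _
  set c : ℝ := t / Real.sqrt 3 with hc
  have h3 : (0:ℝ) < Real.sqrt 3 := Real.sqrt_pos.mpr (by norm_num)
  have hs3 : Real.sqrt 3 ^ 2 = 3 := Real.sq_sqrt (by norm_num)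
  have hcpos : 0 < c := div_pos ht h3
  have hclt : c < t := by
    rw [hc, div_lt_iff₀ h3]; nlinarith
  have hc2 : c ^ 2 = t ^ 2 / 3 := by rw [hc, div_pow, hs3]
  have hd2 : (0:ℝ) < 2 * δ ^ 2 := by positivity
  have hwmono : ∀ x y : ℝ, x ^ 2 ≤ y ^ 2 → w y ≤ w x := fun x y h =>
    Real.exp_le_exp.mpr (div_le_div_of_nonneg_right (by linarith) hd2.le)
  have hwmono' : ∀ x y : ℝ, x ^ 2 < y ^ 2 → w y < w x := fun x y h =>
    Real.exp_lt_exp.mpr (by gcongr)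
  set f : ℝ → ℝ := fun x => (c ^ 2 - x ^ 2) * (w x - w c) with hf
  have hfc : Continuous f := by fun_prop
  have hfnn : ∀ x, 0 ≤ f x := by
    intro x
    rcases le_total (x ^ 2) (c ^ 2) with h | h
    · exact mul_nonneg (by linarith) (sub_nonneg.mpr (hwmono x c h))
    · have h2 := mul_nonneg (by linarith : (0:ℝ) ≤ x ^ 2 - c ^ 2)
        (sub_nonneg.mpr (hwmono c x h))
      show 0 ≤ (c ^ 2 - x ^ 2) * (w x - w c)
      nlinarith [h2]
  have hfpos : 0 < ∫ x in (0:ℝ)..c, f x := by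
    apply intervalIntegral.intervalIntegral_pos_of_pos_on
      (hfc.intervalIntegrable _ _) _ hcpos
    intro x hx
    have hx2 : x ^ 2 < c ^ 2 := by nlinarith [hx.1, hx.2]
    exact mul_pos (by linarith) (sub_pos.mpr (hwmono' x c hx2))
  have hsplit : ∫ x in (-t)..t, f x =
      (∫ x in (-t)..(0:ℝ), f x) + (∫ x in (0:ℝ)..c, f x) + ∫ x in c..t, f x := by
    rw [intervalIntegral.integral_add_adjacent_intervals (hfc.intervalIntegrable _ _)
      (hfc.intervalIntegrable _ _),
      intervalIntegral.integral_add_adjacent_intervals (hfc.intervalIntegrable _ _)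
      (hfc.intervalIntegrable _ _)]
  have h1 : 0 ≤ ∫ x in (-t)..(0:ℝ), f x :=
    intervalIntegral.integral_nonneg (by linarith) (fun u _ => hfnn u)
  have h2 : 0 ≤ ∫ x in c..t, f x :=
    intervalIntegral.integral_nonneg hclt.le (fun u _ => hfnn u)
  have hftot : 0 < ∫ x in (-t)..t, f x := by rw [hsplit]; linarith
  -- expand the integral
  have hint1 : IntervalIntegrable (fun x => (c ^ 2 - x ^ 2) * w x) MeasureTheory.volume (-t) t :=
    (Continuous.intervalIntegrable (by fun_prop) _ _)
  have hint2 : IntervalIntegrable (fun x => (c ^ 2 - x ^ 2) * w c) MeasureTheory.volume (-t) t :=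
    (Continuous.intervalIntegrable (by fun_prop) _ _)
  have hexp : (∫ x in (-t)..t, f x) =
      (∫ x in (-t)..t, (c ^ 2 - x ^ 2) * w x) - ∫ x in (-t)..t, (c ^ 2 - x ^ 2) * w c := by
    rw [← intervalIntegral.integral_sub hint1 hint2]
    congr 1; ext x; ring
  have hzero : (∫ x in (-t)..t, (c ^ 2 - x ^ 2) * w c) = 0 := by
    rw [intervalIntegral.integral_mul_const]
    have : (∫ x in (-t)..t, (c ^ 2 - x ^ 2)) =
        (∫ x in (-t)..t, (c ^ 2 : ℝ)) - ∫ x in (-t)..t, x ^ 2 := by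
      rw [← intervalIntegral.integral_sub (intervalIntegrable_const)
        (Continuous.intervalIntegrable (by fun_prop) _ _)]
    rw [this, intervalIntegral.integral_const, integral_pow, hc2]
    simp only [smul_eq_mul]; ring
  have hintw : IntervalIntegrable w MeasureTheory.volume (-t) t :=
    hwc.intervalIntegrable _ _
  have hintxw : IntervalIntegrable (fun x => x ^ 2 * w x) MeasureTheory.volume (-t) t :=
    (Continuous.intervalIntegrable (by fun_prop) _ _)
  have hexp2 : (∫ x in (-t)..t, (c ^ 2 - x ^ 2) * w x) =
      c ^ 2 * (∫ x in (-t)..t, w x) - ∫ x in (-t)..t, x ^ 2 * w x := by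
    rw [← intervalIntegral.integral_const_mul, ← intervalIntegral.integral_sub
      ((hintw.const_mul _)) hintxw]
    congr 1; ext x; ring
  have hIpos : 0 < ∫ x in (-t)..t, w x := by
    apply intervalIntegral.intervalIntegral_pos_of_pos_on hintw (fun x _ => hwpos x)
    linarith
  have hkey : (∫ x in (-t)..t, x ^ 2 * w x) < c ^ 2 * ∫ x in (-t)..t, w x := by
    have := hftot
    rw [hexp, hzero, hexp2] at this
    linarith
  rw [div_lt_iff₀ hIpos, ← hc2]
  linarith
end

section
/- For every real number α > 0 and every real t with 0 < t < 1/2, the variance of the beta distribution Beta(α, α) truncated to [t, 1−t] satisfies: (∫_{t}^{1−t} a²·a^{α−1}(1−a)^{α−1} da) / (∫_{t}^{1−t} a^{α−1}(1−a)^{α−1} da) − 1/4 = (1/((4α + 2)·B(α,α)))·(t^{α}(1−t)^{α}(4t − 2))/(1 − 2·I_t(α,α)) + (α + 1)/(4α + 2) − 1/4, where B(α,α) = ∫_{0}^{1} a^{α−1}(1−a)^{α−1} da is the beta function and I_t(α,α) = (∫_{0}^{t} a^{α−1}(1−a)^{α−1} da)/B(α,α) is the regularized incomplete beta function. -/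
open Real intervalIntegral MeasureTheory

theorem truncated_beta_variance (α t : ℝ) (hα : 0 < α) (ht : 0 < t) (ht' : t < 1 / 2) :
    let B : ℝ := ∫ a in (0 : ℝ)..1, a ^ (α - 1) * (1 - a) ^ (α - 1)
    let I : ℝ := (∫ a in (0 : ℝ)..t, a ^ (α - 1) * (1 - a) ^ (α - 1)) / B
    (∫ a in t..(1 - t), a ^ 2 * (a ^ (α - 1) * (1 - a) ^ (α - 1))) /
        (∫ a in t..(1 - t), a ^ (α - 1) * (1 - a) ^ (α - 1)) - 1 / 4 =
      (1 / ((4 * α + 2) * B)) * (t ^ α * (1 - t) ^ α * (4 * t - 2)) / (1 - 2 * I) +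
        (α + 1) / (4 * α + 2) - 1 / 4 := by
  intro B I
  have h1t : t < 1 - t := by linarith
  set f : ℝ → ℝ := fun a => a ^ (α - 1) * (1 - a) ^ (α - 1) with hfdef
  have hB : B = ∫ a in (0:ℝ)..1, f a := rfl
  have hI : I = (∫ a in (0:ℝ)..t, f a) / B := rfl
  -- continuity of f at interior points
  have hfc : ∀ x : ℝ, 0 < x → x < 1 → ContinuousAt f x := by
    intro x hx hx1
    exact (Real.continuousAt_rpow_const x (α - 1) (Or.inl hx.ne')).mul
      ((continuousAt_const.sub continuousAt_id).rpow_const (Or.inl (by norm_num; linarith)))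
  have hcmid : ContinuousOn f (Set.uIcc t (1 - t)) := by
    intro x hx
    rw [Set.uIcc_of_le h1t.le] at hx
    exact (hfc x (lt_of_lt_of_le ht hx.1) (by linarith [hx.2])).continuousWithinAt
  have hi_mid : IntervalIntegrable f volume t (1 - t) := hcmid.intervalIntegrable
  -- integrability on [0,t]
  have hcright : ContinuousOn (fun x : ℝ => (1 - x) ^ (α - 1)) (Set.uIcc 0 t) := by
    intro x hx
    rw [Set.uIcc_of_le ht.le] at hx
    exact ((continuousAt_const.sub continuousAt_id).rpow_const
      (Or.inl (by norm_num; linarith [hx.2]))).continuousWithinAt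
  have hi_left : IntervalIntegrable f volume 0 t :=
    (intervalIntegral.intervalIntegrable_rpow' (by linarith)).mul_continuousOn hcright
  have hfsymm : (fun x : ℝ => f (1 - x)) = f := by
    funext x; simp only [hfdef, sub_sub_cancel]; ring
  have hi_right : IntervalIntegrable f volume (1 - t) 1 := by
    have h := hi_left.comp_sub_left 1
    rw [hfsymm] at h
    simpa using h.symm
  -- symmetry of the side integrals
  have hsym : (∫ a in (1 - t)..1, f a) = ∫ a in (0:ℝ)..t, f a := by
    have h := intervalIntegral.integral_comp_sub_left (a := 0) (b := t) f 1
    rw [hfsymm] at h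
    simpa using h.symm
  -- splitting B
  set S : ℝ := ∫ a in (0:ℝ)..t, f a with hSdef
  set D : ℝ := ∫ a in t..(1 - t), f a with hDdef
  have e1 : S + D = ∫ a in (0:ℝ)..(1 - t), f a :=
    integral_add_adjacent_intervals hi_left hi_mid
  have e2 : (∫ a in (0:ℝ)..(1 - t), f a) + (∫ a in (1 - t)..1, f a) = ∫ a in (0:ℝ)..1, f a :=
    integral_add_adjacent_intervals (hi_left.trans hi_mid) hi_right
  have hBsplit : B = S + D + S := by rw [hB, ← e2, ← e1, hsym]
  -- positivity
  have hfpos : ∀ x : ℝ, 0 < x → x < 1 → 0 < f x := fun x hx hx1 =>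
    mul_pos (Real.rpow_pos_of_pos hx _) (Real.rpow_pos_of_pos (by linarith) _)
  have hDpos : 0 < D := by
    rw [hDdef]
    refine intervalIntegral.intervalIntegral_pos_of_pos_on hi_mid (fun x hx => ?_) h1t
    exact hfpos x (ht.trans hx.1) (by linarith [hx.2])
  have hBpos : 0 < B := by
    rw [hB]
    exact intervalIntegral.intervalIntegral_pos_of_pos_on
      ((hi_left.trans hi_mid).trans hi_right) (fun x hx => hfpos x hx.1 hx.2) one_pos
  -- FTC
  set F : ℝ → ℝ := fun a => a ^ α * (1 - a) ^ α * (2 * a - 1) with hFdef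
  have hderiv : ∀ x ∈ Set.uIcc t (1 - t),
      HasDerivAt F (f x * (-(4 * α + 2) * x ^ 2 + (4 * α + 2) * x - α)) x := by
    intro x hx
    rw [Set.uIcc_of_le h1t.le] at hx
    have hx0 : (0:ℝ) < x := lt_of_lt_of_le ht hx.1
    have hx1 : x < 1 := by linarith [hx.2]
    have hx1' : (0:ℝ) < 1 - x := by linarith
    have h1 : HasDerivAt (fun a : ℝ => a ^ α) (α * x ^ (α - 1)) x :=
      Real.hasDerivAt_rpow_const (Or.inl hx0.ne')
    have h2 : HasDerivAt (fun a : ℝ => (1 - a) ^ α) (-(α * (1 - x) ^ (α - 1))) x := by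
      have hinner : HasDerivAt (fun a : ℝ => 1 - a) (-1) x := by
        exact (hasDerivAt_id x).const_sub (1:ℝ)
      have := (Real.hasDerivAt_rpow_const (x := 1 - x) (p := α) (Or.inl hx1'.ne')).comp x hinner
      exact this.congr_deriv (by ring)
    have h3 : HasDerivAt (fun a : ℝ => 2 * a - 1) 2 x := by
      exact (((hasDerivAt_id x).const_mul (2:ℝ)).sub_const (1:ℝ)).congr_deriv (by ring)
    have h := (h1.mul h2).mul h3
    refine h.congr_deriv ?_
    have hxa : x ^ α = x ^ (α - 1) * x := by
      rw [← Real.rpow_add_one hx0.ne' (α - 1)]; ring_nf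
    have hxb : (1 - x) ^ α = (1 - x) ^ (α - 1) * (1 - x) := by
      rw [← Real.rpow_add_one hx1'.ne' (α - 1)]; ring_nf
    simp only [hfdef, Pi.mul_apply, hxa, hxb]
    ring
  have hcpoly : ContinuousOn (fun x : ℝ => -(4 * α + 2) * x ^ 2 + (4 * α + 2) * x - α)
      (Set.uIcc t (1 - t)) := (Continuous.continuousOn (by fun_prop))
  have key : (∫ x in t..(1 - t), f x * (-(4 * α + 2) * x ^ 2 + (4 * α + 2) * x - α))
      = F (1 - t) - F t :=
    intervalIntegral.integral_eq_sub_of_hasDerivAt hderiv (hi_mid.mul_continuousOn hcpoly)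
  -- the three auxiliary integrals
  set N : ℝ := ∫ a in t..(1 - t), a ^ 2 * (a ^ (α - 1) * (1 - a) ^ (α - 1)) with hNdef
  have hN : N = ∫ a in t..(1 - t), a ^ 2 * f a := rfl
  set M : ℝ := ∫ a in t..(1 - t), a * f a with hMdef
  have hiN : IntervalIntegrable (fun a : ℝ => a ^ 2 * f a) volume t (1 - t) :=
    hi_mid.continuousOn_mul ((continuous_pow 2).continuousOn)
  have hiM : IntervalIntegrable (fun a : ℝ => a * f a) volume t (1 - t) :=
    hi_mid.continuousOn_mul (continuous_id.continuousOn)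
  have hsplit : (∫ x in t..(1 - t), f x * (-(4 * α + 2) * x ^ 2 + (4 * α + 2) * x - α))
      = -(4 * α + 2) * N + ((4 * α + 2) * M + (-α) * D) := by
    rw [hN, hMdef, hDdef, ← intervalIntegral.integral_const_mul,
      ← intervalIntegral.integral_const_mul, ← intervalIntegral.integral_const_mul,
      ← intervalIntegral.integral_add (hiM.const_mul _) (hi_mid.const_mul _),
      ← intervalIntegral.integral_add (hiN.const_mul _)
        ((hiM.const_mul _).add (hi_mid.const_mul _))]
    apply intervalIntegral.integral_congr
    intro x _
    ring
  -- M = D / 2 by symmetry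
  have hM : M = D / 2 := by
    have h := intervalIntegral.integral_comp_sub_left (a := t) (b := 1 - t)
      (fun x => x * f x) 1
    simp only [sub_sub_cancel] at h
    have h2 : (∫ x in t..(1 - t), (1 - x) * f (1 - x)) = M := h
    have h3 : (∫ x in t..(1 - t), (1 - x) * f x) = M := by
      rw [← h2]; apply intervalIntegral.integral_congr; intro x _
      have hfx : f (1 - x) = f x := by
        have := congrFun hfsymm x; simpa using this
      show (1 - x) * f x = (1 - x) * f (1 - x)
      rw [hfx]
    have h4 : (∫ x in t..(1 - t), (1 - x) * f x) = D - M := by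
      rw [hDdef, hMdef, ← intervalIntegral.integral_sub hi_mid hiM]
      apply intervalIntegral.integral_congr; intro x _; ring
    have : D - M = M := by rw [← h4, h3]
    linarith
  -- boundary values
  have hFval : F (1 - t) - F t = t ^ α * (1 - t) ^ α * (2 - 4 * t) := by
    simp only [hFdef, sub_sub_cancel]
    ring
  have hkey : (4 * α + 2) * N = (α + 1) * D + t ^ α * (1 - t) ^ α * (4 * t - 2) := by
    have := key
    rw [hsplit, hFval, hM] at this
    linarith
  -- final algebra
  have hDB : D = B * (1 - 2 * I) := by
    rw [hI]
    field_simp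
    linarith [hBsplit]
  have h2I : 1 - 2 * I ≠ 0 := by
    intro h
    rw [h, mul_zero] at hDB
    exact hDpos.ne' hDB
  have h42 : (4 * α + 2) ≠ 0 := by positivity
  show N / D - 1 / 4 = 1 / ((4 * α + 2) * B) * (t ^ α * (1 - t) ^ α * (4 * t - 2)) / (1 - 2 * I)
      + (α + 1) / (4 * α + 2) - 1 / 4
  have hID : 1 - 2 * I = D / B := by
    rw [hDB]; field_simp
  rw [hID]
  have hN' : N = ((α + 1) * D + t ^ α * (1 - t) ^ α * (4 * t - 2)) / (4 * α + 2) := by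
    rw [eq_div_iff h42]; linarith
  have hD0 := hDpos.ne'
  have hB0 := hBpos.ne'
  rw [hN']
  field_simp
  ring
end
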